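/- arXiv:1302.2555 — 2 statements merged into one kernel-verified Lean document; each statement's English description precedes it below -/
import Mathlib

section
/- For every δ ∈ (0,1) there exists an integer N_δ such that for every integer N ≥ N_δ and every integer q with N^δ < q < δN/(2·log N), there exists an integer k with q ≤ k ≤ 2q·log(q)/δ such that the remainder of N upon division by k is at least q. -/
/-!
Suppose `N % k < q` for every `k` with `q ≤ k ≤ M q`, where `M = ⌊2 log q / δ⌋`. Then
`N % (m q) = N % q` for all `m ≤ M`, so `q · lcm(1, …, M)` divides `N - N % q`, and hence
`q · 2 ^ M ≤ (M + 1) · N` by the bound `2 ^ M ≤ (M + 1) · lcm(1, …, M)`. As `q > N ^ δ`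
gives `M + 1 > 2 log N`, we have `2 ^ (M + 1) > N`, so `q < 2 (M + 1) = O(log N / δ)`, which
contradicts `q > N ^ δ` once `N` is large.
-/

open Real Filter

namespace Nat

theorem mod_mul_eq_mod_of_mod_mul_lt {N m q : ℕ} (h : N % (m * q) < q) : N % (m * q) = N % q := by
  rw [← Nat.mod_mul_left_mod N m q, Nat.mod_eq_of_lt h]

theorem mul_lcmUpto_le_of_mod_lt {N q M : ℕ} (hq : 0 < q) (hqN : q ≤ N)
    (h : ∀ k, q ≤ k → k ≤ M * q → N % k < q) : q * lcmUpto M ≤ N := by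
  obtain ⟨D, hD⟩ : q ∣ N - N % q := Nat.dvd_sub_mod N
  have hlcm : lcmUpto M ∣ D := Finset.lcm_dvd fun m hm => by
    obtain ⟨hm1, hmM⟩ := Finset.mem_Icc.mp hm
    have hk := h (m * q) (Nat.le_mul_of_pos_left q hm1) (Nat.mul_le_mul_right q hmM)
    have hdvd : q * m ∣ q * D := by
      rw [← hD, mul_comm q m, ← mod_mul_eq_mod_of_mod_mul_lt hk]
      exact Nat.dvd_sub_mod N
    exact Nat.dvd_of_mul_dvd_mul_left hq hdvd
  have hD0 : 0 < D := by
    have := Nat.mod_lt N hq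
    by_contra! hD0
    simp only [Nat.le_zero.mp hD0, mul_zero] at hD
    omega
  calc q * lcmUpto M ≤ q * D := Nat.mul_le_mul_left q (Nat.le_of_dvd hD0 hlcm)
    _ = N - N % q := hD.symm
    _ ≤ N := Nat.sub_le N _

theorem mul_two_pow_le_of_mod_lt {N q M : ℕ} (hq : 0 < q) (hqN : q ≤ N)
    (h : ∀ k, q ≤ k → k ≤ M * q → N % k < q) : q * 2 ^ M ≤ (M + 1) * N :=
  calc q * 2 ^ M ≤ q * ((M + 1) * lcmUpto M) :=
        Nat.mul_le_mul_left q (Chebyshev.two_pow_le_mul_lcmUpto M)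
    _ = (M + 1) * (q * lcmUpto M) := by ring
    _ ≤ (M + 1) * N := Nat.mul_le_mul_left _ (mul_lcmUpto_le_of_mod_lt hq hqN h)

end Nat

namespace Real

theorem eventually_mul_log_le_rpow {c r : ℝ} (hc : 0 < c) (hr : 0 < r) :
    ∀ᶠ x : ℝ in atTop, c * log x ≤ x ^ r := by
  filter_upwards [(isLittleO_log_rpow_atTop hr).bound (inv_pos.mpr hc), eventually_ge_atTop 1]
    with x hx hx1
  rw [norm_of_nonneg (log_nonneg hx1), norm_of_nonneg (by positivity)] at hx
  rwa [le_inv_mul_iff₀ hc] at hx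

theorem lt_two_pow_of_two_mul_log_lt {x : ℝ} {m : ℕ} (hx : 1 ≤ x) (h : 2 * log x < m) :
    x < 2 ^ m := by
  have hlog2 : 1 / 2 < log 2 := by linarith [log_two_gt_d9]
  rw [← log_lt_log_iff (by linarith) (by positivity), log_pow]
  nlinarith [log_nonneg hx]

theorem lt_two_mul_succ_of_mul_two_pow_le {q x : ℝ} {M : ℕ} (hx : 1 ≤ x)
    (hM : 2 * log x < M + 1) (h : q * 2 ^ M ≤ (M + 1) * x) : q < 2 * (M + 1) := by
  have hx2 : x < 2 ^ M * 2 := by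
    simpa [pow_succ] using lt_two_pow_of_two_mul_log_lt hx (m := M + 1) (by exact_mod_cast hM)
  by_contra! hq
  nlinarith [mul_le_mul_of_nonneg_right hq (by linarith : (0 : ℝ) ≤ x)]

end Real

theorem lt_two_mul_succ_of_mod_lt {N q M : ℕ} (hq : 0 < q) (hqN : q ≤ N)
    (hM : 2 * log N < M + 1) (h : ∀ k, q ≤ k → k ≤ M * q → N % k < q) :
    (q : ℝ) < 2 * (M + 1) :=
  lt_two_mul_succ_of_mul_two_pow_le (by exact_mod_cast hq.trans_le hqN) hM
    (by exact_mod_cast Nat.mul_two_pow_le_of_mod_lt hq hqN h)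

/-- Fact 2.2: for every δ ∈ (0,1) there is N_δ such that for all N ≥ N_δ and all q with
N^δ < q < δN/(2 log N), there exists k with q ≤ k ≤ 2q log q / δ and N mod k ≥ q. -/
theorem stmt2 (δ : ℝ) (hδ : δ ∈ Set.Ioo (0 : ℝ) 1) :
    ∃ Nδ : ℕ, ∀ N : ℕ, Nδ ≤ N → ∀ q : ℕ, 0 < q →
      (N : ℝ) ^ δ < (q : ℝ) → (q : ℝ) < δ * N / (2 * Real.log N) →
      ∃ k : ℕ, q ≤ k ∧ (k : ℝ) ≤ 2 * q * Real.log q / δ ∧ q ≤ N % k := by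
  obtain ⟨hδ0, hδ1⟩ := hδ
  obtain ⟨Nδ, hNδ⟩ := eventually_atTop.mp <| tendsto_natCast_atTop_atTop.eventually <|
    (tendsto_log_atTop.eventually_gt_atTop 1).and
      (eventually_mul_log_le_rpow (c := 8 / δ) (by positivity) hδ0)
  refine ⟨Nδ, fun N hN q hq hNq hqN => ?_⟩
  by_contra! hmod
  obtain ⟨hlogN, hgrowth⟩ := hNδ N hN
  have hq_le_N : q ≤ N := by
    have : δ * N / (2 * log N) ≤ N := by
      rw [div_le_iff₀ (by positivity)]
      nlinarith
    exact_mod_cast (hqN.trans_le this).le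
  have hN0 : (0 : ℝ) < N := by exact_mod_cast hq.trans_le hq_le_N
  have hlogq : δ * log N < log q := by
    simpa [log_rpow hN0] using log_lt_log (by positivity) hNq
  have hlogqN : log q ≤ log N := log_le_log (by positivity) (by exact_mod_cast hq_le_N)
  set M := ⌊2 * log q / δ⌋₊
  have hM_lt : 2 * log q / δ < M + 1 := Nat.lt_floor_add_one _
  have hM_le : (M : ℝ) ≤ 2 * log q / δ := Nat.floor_le (by positivity)
  have hlogN_M : 2 * log N < M + 1 := lt_of_le_of_lt (by rw [le_div_iff₀ hδ0]; linarith) hM_lt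
  have hq_lt := lt_two_mul_succ_of_mod_lt hq hq_le_N hlogN_M fun k hk hkM => hmod k hk <|
    calc (k : ℝ) ≤ M * q := by exact_mod_cast hkM
      _ ≤ 2 * log q / δ * q := by gcongr
      _ = 2 * q * log q / δ := by ring
  have hq_log : (q : ℝ) < 8 / δ * log N :=
    calc (q : ℝ) < 4 * M := by linarith
      _ ≤ 4 * (2 * log q / δ) := by gcongr
      _ ≤ 4 * (2 * log N / δ) := by gcongr
      _ = 8 / δ * log N := by ring
  linarith
end

section
/- For every k ≥ 3 and all sufficiently large n, there exists an integer b with 2·n^{(k+1)/k} ≤ b ≤ 8·n^{(k+1)/k}·log n such that the remainder r of binomial(n,2) modulo (b+1), normalized to lie in [1, b+1], satisfies r ≥ 2·n^{(k+1)/k}. -/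
/-!
Choose `m` so that `N / m` lies in `[a + 1/2, a + 1)` for an integer `a`: then `N % m ≥ m / 2`.
With `q = 2 n^((k+1)/k)`, `N = C(n, 2)`, `Q = ⌈q⌉`, `a = N / (3Q)` and `m = ⌊2N / (2a + 1)⌋` this
gives `2Q ≤ m < 6Q` as soon as `3Q ≤ N ≤ Q² / 2`, which holds for large `n` because
`1 ≤ (k+1)/k ≤ 3/2`. So the modulus is even `O(q)`, and `log n ≥ 2` absorbs the constants.
-/

theorem Nat.le_two_mul_mod_of_mul_le {N m a : ℕ} (hlow : m * (2 * a + 1) ≤ 2 * N)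
    (hhigh : 2 * N < m * (2 * a + 2)) : m ≤ 2 * (N % m) := by
  have hdiv : N / m = a := Nat.div_eq_of_lt_le (by linarith) (by linarith)
  have := Nat.div_add_mod N m
  rw [hdiv] at this
  nlinarith

theorem Nat.exists_le_two_mul_mod {N Q : ℕ} (hQ : 0 < Q) (hQN : 3 * Q ≤ N)
    (hNQ : 2 * N ≤ Q * Q) : ∃ m, 2 * Q ≤ m ∧ m < 6 * Q ∧ m ≤ 2 * (N % m) := by
  set a := N / (3 * Q) with ha
  set m := 2 * N / (2 * a + 1)
  have ha1 : 1 ≤ a := (Nat.one_le_div_iff (by omega)).mpr hQN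
  have haQ : a < Q := by
    rw [ha, Nat.div_lt_iff_lt_mul (by omega)]
    nlinarith
  have haN : a * (3 * Q) ≤ N := Nat.div_mul_le_self _ _
  have hNa : N < (a + 1) * (3 * Q) := Nat.lt_mul_of_div_lt (Nat.lt_succ_self _) (by omega)
  have hmN : m * (2 * a + 1) ≤ 2 * N := Nat.div_mul_le_self _ _
  have hNm : 2 * N < (m + 1) * (2 * a + 1) :=
    Nat.lt_mul_of_div_lt (Nat.lt_succ_self _) (by omega)
  have h2Q : 2 * Q ≤ m := by
    by_contra! h
    have : (m + 1) * (2 * a + 1) ≤ 2 * Q * (2 * a + 1) := Nat.mul_le_mul_right _ h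
    nlinarith
  have h6Q : m < 6 * Q := by
    by_contra! h
    have : 6 * Q * (2 * a + 1) ≤ m * (2 * a + 1) := Nat.mul_le_mul_right _ h
    nlinarith
  exact ⟨m, h2Q, h6Q, Nat.le_two_mul_mod_of_mul_le hmN (by nlinarith)⟩

theorem Nat.exists_real_le_mod {N : ℕ} {q : ℝ} (hq : 0 < q) (hqN : 3 * (q + 1) ≤ N)
    (hNq : 2 * N ≤ q ^ 2) : ∃ m : ℕ, 2 * q ≤ m ∧ m < 6 * (q + 1) ∧ q ≤ (N % m : ℕ) := by
  set Q := ⌈q⌉₊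
  have hqQ : q ≤ Q := Nat.le_ceil q
  have hQq : (Q : ℝ) < q + 1 := Nat.ceil_lt_add_one hq.le
  obtain ⟨m, h2Q, h6Q, hmod⟩ := Nat.exists_le_two_mul_mod (N := N) (Q := Q)
    (Nat.ceil_pos.mpr hq) (by exact_mod_cast (by linarith : (3 * Q : ℝ) ≤ N))
    (by exact_mod_cast (by nlinarith : (2 * N : ℝ) ≤ Q * Q))
  refine ⟨m, ?_, ?_, ?_⟩
  · have : (2 * Q : ℝ) ≤ m := by exact_mod_cast h2Q
    linarith
  · have : (m : ℝ) < 6 * Q := by exact_mod_cast h6Q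
    linarith
  · have : (2 * Q : ℝ) ≤ 2 * (N % m : ℕ) := by exact_mod_cast h2Q.trans hmod
    linarith

theorem Nat.eq_mod_of_mod_eq_of_le {N m r : ℕ} (hN : 0 < N % m) (hrm : r ≤ m)
    (h : N % m = r % m) : r = N % m := by
  rcases hrm.lt_or_eq with hlt | rfl
  · rw [h, Nat.mod_eq_of_lt hlt]
  · rw [Nat.mod_self] at h
    omega

theorem Real.hundred_mul_rpow_le_sq {x α : ℝ} (hx : 10 ^ 4 ≤ x) (hα : α ≤ 3 / 2) :
    100 * x ^ α ≤ x ^ 2 := by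
  have hx1 : 1 ≤ x := by linarith
  have hsqrt : 100 ≤ √x := Real.le_sqrt_of_sq_le (by linarith)
  calc 100 * x ^ α ≤ √x * x ^ ((1 : ℝ) + 1 / 2) := by
        gcongr
        linarith
    _ = x ^ 2 := by
        rw [Real.rpow_add (by linarith), Real.rpow_one, ← Real.sqrt_eq_rpow]
        nlinarith [Real.mul_self_sqrt (by linarith : 0 ≤ x)]

theorem Real.two_le_log {x : ℝ} (hx : 9 ≤ x) : 2 ≤ Real.log x := by
  rw [Real.le_log_iff_exp_le (by linarith), show (2 : ℝ) = 1 + 1 by norm_num, Real.exp_add]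
  nlinarith [Real.exp_one_lt_d9, Real.exp_pos 1]

theorem Nat.exists_rpow_le_choose_two_mod {n : ℕ} {α : ℝ} (hn : 10 ^ 4 ≤ n) (hα1 : 1 ≤ α)
    (hα2 : α ≤ 3 / 2) : ∃ m : ℕ, 4 * (n : ℝ) ^ α ≤ m ∧ m < 12 * (n : ℝ) ^ α + 6 ∧
      2 * (n : ℝ) ^ α ≤ (n.choose 2 % m : ℕ) := by
  have hnR : (10 : ℝ) ^ 4 ≤ n := by exact_mod_cast hn
  have hn_le : (n : ℝ) ≤ (n : ℝ) ^ α := Real.self_le_rpow_of_one_le (by linarith) hα1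
  have hsq := Real.hundred_mul_rpow_le_sq hnR hα2
  have hchoose : (n.choose 2 : ℝ) = n * (n - 1) / 2 := Nat.cast_choose_two ℝ n
  obtain ⟨m, h1, h2, h3⟩ := Nat.exists_real_le_mod (N := n.choose 2) (q := 2 * (n : ℝ) ^ α)
    (by linarith) (by rw [hchoose]; nlinarith) (by rw [hchoose]; nlinarith)
  exact ⟨m, by linarith, by linarith, h3⟩

/-- For every k ≥ 3 and all sufficiently large n there is b with
2·n^{(k+1)/k} ≤ b ≤ 8·n^{(k+1)/k}·log n such that the normalized remainder r of C(n,2)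
mod (b+1), 1 ≤ r ≤ b+1, satisfies r ≥ 2·n^{(k+1)/k}. -/
theorem stmt11 (k : ℕ) (hk : 3 ≤ k) :
    ∃ N : ℕ, ∀ n : ℕ, N ≤ n → ∃ b : ℕ,
      2 * (n : ℝ) ^ (((k : ℝ) + 1) / (k : ℝ)) ≤ (b : ℝ) ∧
      (b : ℝ) ≤ 8 * (n : ℝ) ^ (((k : ℝ) + 1) / (k : ℝ)) * Real.log n ∧
      ∀ r : ℕ, 1 ≤ r → r ≤ b + 1 → n.choose 2 % (b + 1) = r % (b + 1) →
        2 * (n : ℝ) ^ (((k : ℝ) + 1) / (k : ℝ)) ≤ (r : ℝ) := by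
  refine ⟨10 ^ 4, fun n hn => ?_⟩
  set α := ((k : ℝ) + 1) / k
  have hk3 : (3 : ℝ) ≤ k := by exact_mod_cast hk
  have hα1 : 1 ≤ α := by rw [le_div_iff₀ (by linarith)]; linarith
  have hα2 : α ≤ 3 / 2 := by rw [div_le_iff₀ (by linarith)]; linarith
  have hnR : (10 : ℝ) ^ 4 ≤ n := by exact_mod_cast hn
  have hnα : (n : ℝ) ≤ (n : ℝ) ^ α := Real.self_le_rpow_of_one_le (by linarith) hα1
  have hlog : 2 ≤ Real.log n := Real.two_le_log (by linarith)
  obtain ⟨m, hm_low, hm_up, hmod⟩ := Nat.exists_rpow_le_choose_two_mod hn hα1 hα2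
  have hm : 1 ≤ m := by exact_mod_cast (by linarith : (1 : ℝ) ≤ m)
  refine ⟨m - 1, ?_, ?_, fun r _ hr h => ?_⟩
  · push_cast [Nat.cast_sub hm]
    linarith
  · push_cast [Nat.cast_sub hm]
    nlinarith
  · rw [Nat.sub_add_cancel hm] at hr h
    have hpos : 0 < n.choose 2 % m := by
      exact_mod_cast (by linarith : (0 : ℝ) < (n.choose 2 % m : ℕ))
    rwa [Nat.eq_mod_of_mod_eq_of_le hpos hr h]
end
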